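/- arXiv:2404.18823 — 6 statements merged into one kernel-verified Lean document; each statement's English description precedes it below -/
import Mathlib

section
/- Generalized Riemann–Lebesgue lemma with radial phase: for every integrable function f : ℝ^d → ℂ, the integral ∫_{ℝ^d} e^{i t |ξ|} f(ξ) dξ tends to 0 as |t| → ∞ (t real, i.e. along the cocompact filter on ℝ). -/
open MeasureTheory Filter Set Metric Module
open scoped Real

/-!
In polar coordinates `ξ = r • ω` the phase `e^{i t ‖ξ‖} = e^{i t r}` no longer depends on `ω`, so
the integral becomes the one-dimensional Fourier integral of the spherical mean
`r ↦ 1_{r > 0} r^{d-1} ∫_{S^{d-1}} f (r • ω) dω`, which tends to `0` by the classical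
Riemann–Lebesgue lemma on `ℝ`.
-/

theorem comp_homeomorphUnitSphereProd {E F : Type*} [NormedAddCommGroup E] [NormedSpace ℝ E]
    (f : E → F) :
    (fun p : sphere (0 : E) 1 × Ioi (0 : ℝ) ↦ f (p.2.1 • p.1.1)) ∘ homeomorphUnitSphereProd E =
      fun x : ({0}ᶜ : Set E) ↦ f x := by
  ext x
  simp [smul_inv_smul₀ (norm_ne_zero_iff.2 x.2)]

namespace MeasureTheory.Measure

theorem integral_volumeIoiPow {F : Type*} [NormedAddCommGroup F] [NormedSpace ℝ F] (n : ℕ)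
    (g : ℝ → F) : ∫ r, g r ∂volumeIoiPow n = ∫ r in Ioi (0 : ℝ), r ^ n • g r := by
  rw [volumeIoiPow, integral_withDensity_eq_integral_toReal_smul (by fun_prop)
    (ae_of_all _ fun _ ↦ ENNReal.ofReal_lt_top), integral_subtype_comap measurableSet_Ioi
    fun r ↦ (ENNReal.ofReal (r ^ n)).toReal • g r]
  refine setIntegral_congr_fun measurableSet_Ioi fun r hr ↦ ?_
  rw [ENNReal.toReal_ofReal (pow_nonneg (le_of_lt hr) n)]

variable {E F : Type*} [NormedAddCommGroup E] [NormedSpace ℝ E] [FiniteDimensional ℝ E]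
  [MeasurableSpace E] [BorelSpace E] (μ : Measure E) [μ.IsAddHaarMeasure]
  [NormedAddCommGroup F]

theorem integrable_toSphere_prod {f : E → F} (hf : Integrable f μ) :
    Integrable (fun p ↦ f (p.2.1 • p.1.1)) (μ.toSphere.prod (volumeIoiPow (finrank ℝ E - 1))) := by
  rw [← (μ.measurePreserving_homeomorphUnitSphereProd).integrable_comp_emb
      (Homeomorph.measurableEmbedding _), comp_homeomorphUnitSphereProd]
  exact (integrableOn_iff_comap_subtypeVal (measurableSet_singleton 0).compl).1 hf.integrableOn

variable [NormedSpace ℝ F] [Nontrivial E]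

theorem integral_eq_integral_toSphere_prod (f : E → F) :
    ∫ x, f x ∂μ = ∫ p, f (p.2.1 • p.1.1) ∂(μ.toSphere.prod (volumeIoiPow (finrank ℝ E - 1))) := by
  calc ∫ x, f x ∂μ = ∫ x : ({0}ᶜ : Set E), f x ∂(μ.comap (↑)) := by
        rw [integral_subtype_comap (measurableSet_singleton 0).compl, restrict_compl_singleton]
    _ = ∫ x, ((fun p ↦ f (p.2.1 • p.1.1)) ∘ homeomorphUnitSphereProd E) x ∂(μ.comap (↑)) := by
        rw [comp_homeomorphUnitSphereProd]
    _ = _ := (μ.measurePreserving_homeomorphUnitSphereProd).integral_comp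
        (Homeomorph.measurableEmbedding _) fun p ↦ f (p.2.1 • p.1.1)

theorem integral_eq_integral_Ioi_integral_toSphere [CompleteSpace F] {f : E → F}
    (hf : Integrable f μ) :
    ∫ x, f x ∂μ = ∫ r in Ioi (0 : ℝ), r ^ (finrank ℝ E - 1) • ∫ ω, f (r • ω.1) ∂μ.toSphere := by
  rw [integral_eq_integral_toSphere_prod, integral_prod_symm _ (integrable_toSphere_prod μ hf),
    integral_volumeIoiPow _ fun r ↦ ∫ ω, f (r • ω.1) ∂μ.toSphere]

end MeasureTheory.Measure

theorem Real.tendsto_integral_exp_I_mul_smul_cocompact {E : Type*} [NormedAddCommGroup E]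
    [NormedSpace ℂ E] (g : ℝ → E) :
    Tendsto (fun t : ℝ ↦ ∫ r : ℝ, Complex.exp (Complex.I * t * r) • g r) (cocompact ℝ)
      (nhds 0) := by
  have h_rescale : Tendsto (fun t : ℝ ↦ t * (-(2 * π))⁻¹) (cocompact ℝ) (cocompact ℝ) :=
    (Homeomorph.mulRight₀ (-(2 * π))⁻¹ (by simp [Real.pi_ne_zero])).map_cocompact.le
  refine ((Real.tendsto_integral_exp_smul_cocompact g).comp h_rescale).congr fun t ↦ ?_
  refine integral_congr_ae (ae_of_all _ fun r ↦ ?_)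
  simp only [Circle.smul_def, Real.fourierChar_apply]
  congr 2
  push_cast
  field_simp

/-- **Generalized Riemann–Lebesgue lemma with radial phase.** For every integrable
function `f : ℝ^d → ℂ`, the integral `∫ e^{i t |ξ|} f ξ dξ` tends to `0` as `|t| → ∞`. -/
theorem generalized_riemann_lebesgue_radial (d : ℕ) (hd : 1 ≤ d)
    (f : EuclideanSpace ℝ (Fin d) → ℂ) (hf : Integrable f) :
    Tendsto (fun t : ℝ => ∫ ξ, Complex.exp (Complex.I * (t : ℂ) * (‖ξ‖ : ℂ)) * f ξ)
      (cocompact ℝ) (nhds 0) := by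
  obtain ⟨n, rfl⟩ : ∃ n, d = n + 1 := ⟨d - 1, by omega⟩
  set S : ℝ → ℂ := fun r ↦ ∫ ω, f (r • ω.1) ∂volume.toSphere
  have h_polar (t : ℝ) : ∫ ξ, Complex.exp (Complex.I * t * ‖ξ‖) * f ξ =
      ∫ r : ℝ, Complex.exp (Complex.I * t * r) • (Ioi 0).indicator (fun r ↦ r ^ n • S r) r := by
    have h_int : Integrable (fun ξ ↦ Complex.exp (Complex.I * t * ‖ξ‖) * f ξ) :=
      hf.bdd_mul (c := 1) (by fun_prop) (ae_of_all _ fun ξ ↦ by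
        rw [mul_assoc, ← Complex.ofReal_mul, Complex.norm_exp_I_mul_ofReal])
    rw [volume.integral_eq_integral_Ioi_integral_toSphere h_int,
      ← integral_indicator measurableSet_Ioi]
    refine congrArg (integral volume) (funext fun r ↦ ?_)
    rcases le_or_gt r 0 with hr | hr
    · simp [indicator_of_notMem (notMem_Ioi.2 hr)]
    have h_norm (ω : sphere (0 : EuclideanSpace ℝ (Fin (n + 1))) 1) : ‖r • ω.1‖ = r := by
      rw [norm_smul, norm_eq_of_mem_sphere ω, mul_one, Real.norm_of_nonneg hr.le]
    simp only [indicator_of_mem (mem_Ioi.2 hr), finrank_euclideanSpace_fin, h_norm,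
      integral_const_mul, S, add_tsub_cancel_right, smul_eq_mul, Complex.real_smul]
    ring
  exact (Real.tendsto_integral_exp_I_mul_smul_cocompact _).congr fun t ↦ (h_polar t).symm
end

section
/- First-order Riemann–Lebesgue decay of radial trigonometric multipliers: for every integrable function f : ℝ^d → ℂ, both ∫_{ℝ^d} cos(t |ξ|) f(ξ) dξ → 0 and ∫_{ℝ^d} sin(t |ξ|) f(ξ) dξ → 0 as |t| → ∞ (t real). -/
/-!
In polar coordinates Lebesgue measure on `ℝ^d` has the radial density `r^(d-1)`, so the preimage
of a null set under `ξ ↦ ‖ξ‖` is null. Hence for `g ≥ 0` integrable the push-forward of `g dξ`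
under the norm is a finite measure absolutely continuous on `ℝ`; its Radon–Nikodym density
`h ∈ L¹(ℝ)` turns `∫ e^{it‖ξ‖} g ξ dξ` into `∫ e^{itr} h r dr`, which tends to `0` by the
one-dimensional Riemann–Lebesgue lemma. A complex integrable `f` is a combination of four such
`g`, and `cos`, `sin` are combinations of `e^{±it‖ξ‖}`.
-/

open MeasureTheory Filter Set Topology Complex

section Norm

variable {E : Type*} [NormedAddCommGroup E] [InnerProductSpace ℝ E] [FiniteDimensional ℝ E]
  [MeasurableSpace E] [BorelSpace E] [Nontrivial E] (μ : Measure E) [μ.IsAddHaarMeasure]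

theorem MeasureTheory.Measure.addHaar_preimage_norm_eq_zero {s : Set ℝ} (hs : volume s = 0) :
    μ ((‖·‖) ⁻¹' s) = 0 := by
  obtain ⟨t, hst, ht, ht0⟩ := exists_measurable_superset_of_null hs
  have hbounded (n : ℕ) : μ ((‖·‖) ⁻¹' (t ∩ Iio (n : ℝ))) = 0 := by
    set u := t ∩ Iio (n : ℝ)
    have hfin : μ ((‖·‖) ⁻¹' u) ≠ ⊤ :=
      ((measure_mono fun x hx => mem_ball_zero_iff.2 hx.2).trans_lt measure_ball_lt_top).ne
    rw [← measureReal_eq_zero_iff hfin,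
      ← integral_indicator_one (measurable_norm (ht.inter measurableSet_Iio))]
    refine (integral_fun_norm_addHaar μ (u.indicator 1)).trans ?_
    suffices ∫ y in Ioi 0, y ^ (Module.finrank ℝ E - 1) • u.indicator (1 : ℝ → ℝ) y = 0 by
      rw [this, smul_zero, smul_zero]
    refine integral_eq_zero_of_ae (ae_restrict_of_ae ?_)
    filter_upwards [measure_eq_zero_iff_ae_notMem.1 ht0] with y hy
    simp [u, hy]
  refine measure_mono_null (fun x hx => ?_) (measure_iUnion_null hbounded)
  obtain ⟨n, hn⟩ := exists_nat_gt ‖x‖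
  exact mem_iUnion.2 ⟨n, hst hx, hn⟩

theorem MeasureTheory.Measure.quasiMeasurePreserving_norm :
    Measure.QuasiMeasurePreserving (‖·‖) μ volume :=
  ⟨measurable_norm, .mk fun _ hs hs0 => by
    rw [Measure.map_apply measurable_norm hs]
    exact μ.addHaar_preimage_norm_eq_zero hs0⟩

end Norm

noncomputable def oscillatoryIntegral {X : Type*} [MeasurableSpace X] (μ : Measure X)
    (φ : X → ℝ) (f : X → ℂ) (t : ℝ) : ℂ :=
  ∫ x, cexp ((t * φ x : ℝ) * I) * f x ∂μ

theorem tendsto_oscillatoryIntegral_id (h : ℝ → ℂ) :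
    Tendsto (oscillatoryIntegral volume id h) (cocompact ℝ) (𝓝 0) := by
  have hscale : Tendsto (fun t : ℝ => -(2 * Real.pi)⁻¹ * t) (cocompact ℝ) (cocompact ℝ) :=
    tendsto_cocompact_mul_left₀ (by simp [Real.pi_ne_zero])
  -- `𝐞 (-(r * w)) = e^{itr}` for `w = -t / (2π)`
  refine (Real.tendsto_integral_exp_smul_cocompact h |>.comp hscale).congr fun t => ?_
  refine integral_congr_ae (.of_forall fun r => ?_)
  simp only [Real.fourierChar_apply, Circle.smul_def, smul_eq_mul, id]
  congr 3
  field_simp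

section Phase

variable {X : Type*} [MeasurableSpace X] {μ : Measure X} {φ : X → ℝ}

theorem integrable_exp_phase_mul (hφ : AEMeasurable φ μ) {f : X → ℂ} (hf : Integrable f μ)
    (t : ℝ) :
    Integrable (fun x => cexp ((t * φ x : ℝ) * I) * f x) μ :=
  hf.bdd_mul (c := 1) (by fun_prop) (.of_forall fun x => (norm_exp_ofReal_mul_I _).le)

theorem oscillatoryIntegral_sub (hφ : AEMeasurable φ μ) {f g : X → ℂ} (hf : Integrable f μ)
    (hg : Integrable g μ) :
    oscillatoryIntegral μ φ (f - g) = oscillatoryIntegral μ φ f - oscillatoryIntegral μ φ g := by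
  ext t
  simp only [oscillatoryIntegral, Pi.sub_apply, mul_sub]
  exact integral_sub (integrable_exp_phase_mul hφ hf t) (integrable_exp_phase_mul hφ hg t)

theorem oscillatoryIntegral_add (hφ : AEMeasurable φ μ) {f g : X → ℂ} (hf : Integrable f μ)
    (hg : Integrable g μ) :
    oscillatoryIntegral μ φ (f + g) = oscillatoryIntegral μ φ f + oscillatoryIntegral μ φ g := by
  ext t
  simp only [oscillatoryIntegral, Pi.add_apply, mul_add]
  exact integral_add (integrable_exp_phase_mul hφ hf t) (integrable_exp_phase_mul hφ hg t)

theorem oscillatoryIntegral_const_smul (c : ℂ) (f : X → ℂ) :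
    oscillatoryIntegral μ φ (c • f) = c • oscillatoryIntegral μ φ f := by
  ext t
  simp only [oscillatoryIntegral, Pi.smul_apply, smul_eq_mul, mul_left_comm _ c]
  exact integral_const_mul c _

theorem tendsto_oscillatoryIntegral_of_nonneg (hφ : Measure.QuasiMeasurePreserving φ μ volume)
    {g : X → ℝ} (hg0 : 0 ≤ g) (hg : Integrable g μ) :
    Tendsto (oscillatoryIntegral μ φ fun x => g x) (cocompact ℝ) (𝓝 0) := by
  set ν := (μ.withDensity fun x => ENNReal.ofReal (g x)).map φ
  have : IsFiniteMeasure ν := by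
    have := isFiniteMeasure_withDensity_ofReal hg.2
    exact Measure.isFiniteMeasure_map _ _
  have hν : ν ≪ volume :=
    ((withDensity_absolutelyContinuous μ _).map hφ.measurable).trans hφ.absolutelyContinuous
  refine (tendsto_oscillatoryIntegral_id fun r => (ν.rnDeriv volume r).toReal).congr fun t => ?_
  calc oscillatoryIntegral volume id (fun r => ((ν.rnDeriv volume r).toReal : ℂ)) t
      = ∫ r, cexp ((t * r : ℝ) * I) ∂ν := by
        rw [← integral_rnDeriv_smul hν]
        simp only [oscillatoryIntegral, id, real_smul, mul_comm]
    _ = ∫ x, cexp ((t * φ x : ℝ) * I) ∂(μ.withDensity fun x => ENNReal.ofReal (g x)) :=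
        integral_map hφ.measurable.aemeasurable (by fun_prop)
    _ = oscillatoryIntegral μ φ (fun x => g x) t := by
        rw [integral_withDensity_eq_integral_toReal_smul₀ hg.1.aemeasurable.ennreal_ofReal
          (.of_forall fun _ => ENNReal.ofReal_lt_top)]
        refine integral_congr_ae (.of_forall fun x => ?_)
        simp only [ENNReal.toReal_ofReal (hg0 x), real_smul, mul_comm]

theorem tendsto_oscillatoryIntegral_ofReal (hφ : Measure.QuasiMeasurePreserving φ μ volume)
    {g : X → ℝ} (hg : Integrable g μ) :
    Tendsto (oscillatoryIntegral μ φ fun x => g x) (cocompact ℝ) (𝓝 0) := by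
  have hsplit : (fun x => (g x : ℂ)) =
      (fun x => ((max (g x) 0 : ℝ) : ℂ)) - fun x => ((max (-g x) 0 : ℝ) : ℂ) := by
    ext x
    simp only [Pi.sub_apply, ← ofReal_sub, max_zero_sub_max_neg_zero_eq_self]
  have hpos : Integrable (fun x => ((max (g x) 0 : ℝ) : ℂ)) μ := hg.pos_part.ofReal
  have hneg : Integrable (fun x => ((max (-g x) 0 : ℝ) : ℂ)) μ := hg.neg_part.ofReal
  rw [hsplit, oscillatoryIntegral_sub hφ.measurable.aemeasurable hpos hneg, ← sub_zero (0 : ℂ)]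
  exact (tendsto_oscillatoryIntegral_of_nonneg hφ (fun x => le_max_right _ _) hg.pos_part).sub
    (tendsto_oscillatoryIntegral_of_nonneg hφ (fun x => le_max_right _ _) hg.neg_part)

theorem tendsto_oscillatoryIntegral (hφ : Measure.QuasiMeasurePreserving φ μ volume)
    {f : X → ℂ} (hf : Integrable f μ) :
    Tendsto (oscillatoryIntegral μ φ f) (cocompact ℝ) (𝓝 0) := by
  have hsplit : f = (fun x => ((f x).re : ℂ)) + I • fun x => ((f x).im : ℂ) := by
    ext x
    simp [mul_comm I, re_add_im]
  have hre : Integrable (fun x => ((f x).re : ℂ)) μ := hf.re.ofReal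
  have him : Integrable (I • fun x => ((f x).im : ℂ)) μ := hf.im.ofReal.smul I
  rw [hsplit, oscillatoryIntegral_add hφ.measurable.aemeasurable hre him,
    oscillatoryIntegral_const_smul]
  have hlim := (tendsto_oscillatoryIntegral_ofReal hφ (g := fun x => (f x).re) hf.re).add
    ((tendsto_oscillatoryIntegral_ofReal hφ (g := fun x => (f x).im) hf.im).const_smul I)
  rwa [smul_zero, add_zero] at hlim

theorem integral_cos_phase_mul (hφ : AEMeasurable φ μ) {f : X → ℂ} (hf : Integrable f μ)
    (t : ℝ) :
    ∫ x, (Real.cos (t * φ x) : ℂ) * f x ∂μ =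
      (oscillatoryIntegral μ φ f t + oscillatoryIntegral μ φ f (-t)) / 2 := by
  rw [oscillatoryIntegral, oscillatoryIntegral, ← integral_add (integrable_exp_phase_mul hφ hf t)
    (integrable_exp_phase_mul hφ hf (-t)), ← integral_div]
  refine integral_congr_ae (.of_forall fun x => ?_)
  simp only [ofReal_cos, Complex.cos]
  push_cast
  ring_nf

theorem integral_sin_phase_mul (hφ : AEMeasurable φ μ) {f : X → ℂ} (hf : Integrable f μ)
    (t : ℝ) :
    ∫ x, (Real.sin (t * φ x) : ℂ) * f x ∂μ =
      (oscillatoryIntegral μ φ f (-t) - oscillatoryIntegral μ φ f t) * I / 2 := by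
  rw [oscillatoryIntegral, oscillatoryIntegral, ← integral_sub (integrable_exp_phase_mul hφ hf (-t))
    (integrable_exp_phase_mul hφ hf t), ← integral_mul_const, ← integral_div]
  refine integral_congr_ae (.of_forall fun x => ?_)
  simp only [ofReal_sin, Complex.sin]
  push_cast
  ring_nf

theorem tendsto_oscillatoryIntegral_neg (hφ : Measure.QuasiMeasurePreserving φ μ volume)
    {f : X → ℂ} (hf : Integrable f μ) :
    Tendsto (fun t => oscillatoryIntegral μ φ f (-t)) (cocompact ℝ) (𝓝 0) :=
  (tendsto_oscillatoryIntegral hφ hf).comp (Homeomorph.neg ℝ).isClosedEmbedding.tendsto_cocompact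

theorem tendsto_integral_cos_phase_mul (hφ : Measure.QuasiMeasurePreserving φ μ volume)
    {f : X → ℂ} (hf : Integrable f μ) :
    Tendsto (fun t : ℝ => ∫ x, (Real.cos (t * φ x) : ℂ) * f x ∂μ) (cocompact ℝ) (𝓝 0) := by
  have hlim :=
    ((tendsto_oscillatoryIntegral hφ hf).add (tendsto_oscillatoryIntegral_neg hφ hf)).div_const 2
  rw [add_zero, zero_div] at hlim
  exact hlim.congr fun t => (integral_cos_phase_mul hφ.measurable.aemeasurable hf t).symm

theorem tendsto_integral_sin_phase_mul (hφ : Measure.QuasiMeasurePreserving φ μ volume)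
    {f : X → ℂ} (hf : Integrable f μ) :
    Tendsto (fun t : ℝ => ∫ x, (Real.sin (t * φ x) : ℂ) * f x ∂μ) (cocompact ℝ) (𝓝 0) := by
  have hlim := (((tendsto_oscillatoryIntegral_neg hφ hf).sub
    (tendsto_oscillatoryIntegral hφ hf)).mul_const I).div_const 2
  rw [sub_zero, zero_mul, zero_div] at hlim
  exact hlim.congr fun t => (integral_sin_phase_mul hφ.measurable.aemeasurable hf t).symm

end Phase

/-- **First-order Riemann–Lebesgue decay of radial trigonometric multipliers.** For every
integrable `f : ℝ^d → ℂ`, both `∫ cos(t|ξ|) f ξ dξ → 0` and `∫ sin(t|ξ|) f ξ dξ → 0`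
as `|t| → ∞`. -/
theorem radial_trig_riemann_lebesgue (d : ℕ) (hd : 1 ≤ d)
    (f : EuclideanSpace ℝ (Fin d) → ℂ) (hf : Integrable f) :
    Tendsto (fun t : ℝ => ∫ ξ, (Real.cos (t * ‖ξ‖) : ℂ) * f ξ)
      (cocompact ℝ) (nhds 0) ∧
    Tendsto (fun t : ℝ => ∫ ξ, (Real.sin (t * ‖ξ‖) : ℂ) * f ξ)
      (cocompact ℝ) (nhds 0) := by
  have : Nonempty (Fin d) := ⟨⟨0, hd⟩⟩
  have hnorm := (volume : Measure (EuclideanSpace ℝ (Fin d))).quasiMeasurePreserving_norm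
  exact ⟨tendsto_integral_cos_phase_mul hnorm hf, tendsto_integral_sin_phase_mul hnorm hf⟩
end

section
/- Equipartition for squared radial trigonometric multipliers: for every integrable function f : ℝ^d → ℂ, ∫_{ℝ^d} cos²(t |ξ|) f(ξ) dξ → (1/2) ∫_{ℝ^d} f(ξ) dξ and ∫_{ℝ^d} sin²(t |ξ|) f(ξ) dξ → (1/2) ∫_{ℝ^d} f(ξ) dξ as |t| → ∞ (t real). -/
/-!
In polar coordinates `x = r • ω`, an integral `∫ G ‖x‖ • f x` over an `n`-dimensional real
normed space becomes the one-dimensional integral `∫ G r • h r` against the radial profile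
`h r = r ^ (n - 1) • ∫_{‖ω‖ = 1} f (r • ω)`. Hence the Riemann–Lebesgue lemma on `ℝ` gives
`∫ cos (t ‖x‖) • f x → 0`, and the double-angle formulas `cos² θ = (1 + cos 2θ) / 2`,
`sin² θ = (1 - cos 2θ) / 2` reduce both limits to this one.
-/

open MeasureTheory Filter Set Metric Module Topology

namespace MeasureTheory

section TrigMultiplier

variable {α F : Type*} [MeasurableSpace α] {μ : Measure α} {φ : α → ℝ} {f : α → F}
  [NormedAddCommGroup F]

theorem Integrable.cos_smul [NormedSpace ℝ F] (hf : Integrable f μ) (hφ : AEMeasurable φ μ) :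
    Integrable (fun x ↦ Real.cos (φ x) • f x) μ :=
  hf.bdd_smul 1 (by fun_prop) (.of_forall fun x ↦ by simpa using Real.abs_cos_le_one _)

theorem Integrable.exp_mul_I_smul [NormedSpace ℂ F] (hf : Integrable f μ)
    (hφ : AEMeasurable φ μ) : Integrable (fun x ↦ Complex.exp (φ x * Complex.I) • f x) μ :=
  hf.bdd_smul 1 (by fun_prop) (.of_forall fun x ↦ by simp [Complex.norm_exp_ofReal_mul_I])

variable [NormedSpace ℝ F]

theorem integral_cos_sq_smul (hφ : AEMeasurable φ μ) (hf : Integrable f μ) :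
    ∫ x, Real.cos (φ x) ^ 2 • f x ∂μ =
      (2⁻¹ : ℝ) • ∫ x, f x ∂μ + (2⁻¹ : ℝ) • ∫ x, Real.cos (2 * φ x) • f x ∂μ := by
  rw [← integral_smul, ← integral_smul, ← integral_add]
  · congr 1 with x
    rw [Real.cos_sq]
    module
  exacts [hf.smul _, (hf.cos_smul (hφ.const_mul 2)).smul _]

theorem integral_sin_sq_smul (hφ : AEMeasurable φ μ) (hf : Integrable f μ) :
    ∫ x, Real.sin (φ x) ^ 2 • f x ∂μ =
      (2⁻¹ : ℝ) • ∫ x, f x ∂μ - (2⁻¹ : ℝ) • ∫ x, Real.cos (2 * φ x) • f x ∂μ := by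
  rw [← integral_smul, ← integral_smul, ← integral_sub]
  · congr 1 with x
    rw [Real.sin_sq_eq_half_sub]
    module
  exacts [hf.smul _, (hf.cos_smul (hφ.const_mul 2)).smul _]

end TrigMultiplier

section Polar

variable {E F : Type*} [NormedAddCommGroup E] [NormedSpace ℝ E] [MeasurableSpace E]
  [NormedAddCommGroup F] [NormedSpace ℝ F]

theorem integral_volumeIoiPow (n : ℕ) (g : ℝ → F) :
    ∫ r : Ioi (0 : ℝ), g r ∂Measure.volumeIoiPow n = ∫ r in Ioi 0, r ^ n • g r := by
  simp only [Measure.volumeIoiPow, ENNReal.ofReal]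
  rw [integral_withDensity_eq_integral_smul (measurable_subtype_coe.pow_const _).real_toNNReal,
    integral_subtype_comap measurableSet_Ioi fun r ↦ (r ^ n).toNNReal • g r]
  refine setIntegral_congr_fun measurableSet_Ioi fun r hr ↦ ?_
  rw [NNReal.smul_def, Real.coe_toNNReal _ (pow_nonneg hr.out.le _)]

variable [BorelSpace E] [FiniteDimensional ℝ E] [Nontrivial E] (μ : Measure E)
  [μ.IsAddHaarMeasure]

theorem integral_eq_setIntegral_Ioi_pow_smul_integral_toSphere {g : E → F}
    (hg : Integrable g μ) :
    ∫ x, g x ∂μ = ∫ r in Ioi (0 : ℝ),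
      r ^ (finrank ℝ E - 1) • ∫ ω : sphere (0 : E) 1, g (r • (ω : E)) ∂μ.toSphere := by
  have hmp := μ.measurePreserving_homeomorphUnitSphereProd
  have he := (homeomorphUnitSphereProd E).measurableEmbedding
  have hs : MeasurableSet ({0}ᶜ : Set E) := (measurableSet_singleton 0).compl
  set g' : sphere (0 : E) 1 × Ioi (0 : ℝ) → F := fun p ↦ g ((p.2 : ℝ) • (p.1 : E))
  have hg' (x : ({0}ᶜ : Set E)) : g' (homeomorphUnitSphereProd E x) = g x := by
    simp [g', smul_inv_smul₀ (norm_ne_zero_iff.2 x.2)]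
  have hint : Integrable g' (μ.toSphere.prod (Measure.volumeIoiPow (finrank ℝ E - 1))) := by
    rw [← hmp.integrable_comp_emb he, Function.comp_def]
    simp only [hg']
    exact (integrableOn_iff_comap_subtypeVal hs).1 hg.integrableOn
  calc ∫ x, g x ∂μ = ∫ x : ({0}ᶜ : Set E), g x ∂μ.comap Subtype.val := by
        rw [integral_subtype_comap hs, restrict_compl_singleton]
    _ = ∫ p, g' p ∂μ.toSphere.prod (Measure.volumeIoiPow (finrank ℝ E - 1)) := by
        simp only [← hmp.integral_comp he, hg']
    _ = _ := integral_prod_symm g' hint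
    _ = _ := integral_volumeIoiPow _ fun r ↦ ∫ ω : sphere (0 : E) 1, g (r • (ω : E)) ∂μ.toSphere

noncomputable def radialProfile (f : E → F) (r : ℝ) : F :=
  (Ioi 0).indicator
    (fun r ↦ r ^ (finrank ℝ E - 1) • ∫ ω : sphere (0 : E) 1, f (r • (ω : E)) ∂μ.toSphere) r

theorem integral_comp_norm_smul_eq_integral_smul_radialProfile {𝕜 : Type*}
    [NontriviallyNormedField 𝕜] [NormedSpace 𝕜 F] [SMulCommClass ℝ 𝕜 F] {G : ℝ → 𝕜} {f : E → F}
    (h : Integrable (fun x ↦ G ‖x‖ • f x) μ) :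
    ∫ x, G ‖x‖ • f x ∂μ = ∫ r, G r • radialProfile μ f r := by
  rw [integral_eq_setIntegral_Ioi_pow_smul_integral_toSphere μ h,
    ← integral_indicator measurableSet_Ioi]
  congr 1 with r
  by_cases hr : r ∈ Ioi 0
  · simp [radialProfile, hr, norm_smul, abs_of_pos hr.out, integral_smul, smul_comm]
  · simp [radialProfile, hr]

end Polar

section RiemannLebesgue

variable {F : Type*} [NormedAddCommGroup F] [NormedSpace ℂ F]

theorem tendsto_integral_exp_mul_I_smul_cocompact (h : ℝ → F) :
    Tendsto (fun t : ℝ ↦ ∫ r, Complex.exp ((t * r : ℝ) * Complex.I) • h r) (cocompact ℝ)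
      (𝓝 0) := by
  -- `𝐞 (-(r * s)) = exp (-2π i r s)`, so `s = -t / (2π)` turns it into `exp (i t r)`.
  have hscale : Tendsto (fun t : ℝ ↦ t * -(2 * Real.pi)⁻¹) (cocompact ℝ) (cocompact ℝ) :=
    tendsto_cocompact_mul_right₀ (by simp [Real.pi_ne_zero])
  refine ((Real.tendsto_integral_exp_smul_cocompact h).comp hscale).congr fun t ↦ ?_
  simp only [Function.comp_apply, Circle.smul_def, Real.fourierChar_apply]
  congr 1 with r
  field_simp

variable {E : Type*} [NormedAddCommGroup E] [NormedSpace ℝ E] [MeasurableSpace E] [BorelSpace E]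
  [FiniteDimensional ℝ E] [Nontrivial E] (μ : Measure E) [μ.IsAddHaarMeasure]
  {f : E → F}

theorem tendsto_integral_exp_mul_norm_smul_cocompact (hf : Integrable f μ) :
    Tendsto (fun t : ℝ ↦ ∫ x, Complex.exp ((t * ‖x‖ : ℝ) * Complex.I) • f x ∂μ) (cocompact ℝ)
      (𝓝 0) :=
  (tendsto_integral_exp_mul_I_smul_cocompact (radialProfile μ f)).congr fun t ↦
    (integral_comp_norm_smul_eq_integral_smul_radialProfile μ
      (G := fun r ↦ Complex.exp ((t * r : ℝ) * Complex.I)) (hf.exp_mul_I_smul (by fun_prop))).symm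

theorem tendsto_integral_cos_mul_norm_smul_cocompact (hf : Integrable f μ) :
    Tendsto (fun t : ℝ ↦ ∫ x, Real.cos (t * ‖x‖) • f x ∂μ) (cocompact ℝ) (𝓝 0) := by
  have hexp := tendsto_integral_exp_mul_norm_smul_cocompact μ hf
  have hneg : Tendsto Neg.neg (cocompact ℝ) (cocompact ℝ) := (Homeomorph.neg ℝ).map_cocompact.le
  have hsum := (hexp.add (hexp.comp hneg)).const_smul (2⁻¹ : ℂ)
  rw [add_zero, smul_zero] at hsum
  refine hsum.congr fun t ↦ ?_
  have hcos (θ : ℝ) (v : F) : (2⁻¹ : ℂ) • (Complex.exp (θ * Complex.I) • v +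
      Complex.exp ((-θ : ℝ) * Complex.I) • v) = Real.cos θ • v := by
    rw [← add_smul, smul_smul, ← Complex.coe_smul, Complex.ofReal_cos, Complex.ofReal_neg,
      ← Complex.two_cos]
    congr 1
    field_simp
  simp only [Function.comp_apply, neg_mul]
  rw [← integral_add (hf.exp_mul_I_smul (by fun_prop)) (hf.exp_mul_I_smul (by fun_prop)),
    ← integral_smul]
  simp only [hcos]

end RiemannLebesgue

end MeasureTheory

/-- **Equipartition for squared radial trigonometric multipliers.** For every integrable
`f : ℝ^d → ℂ`, `∫ cos²(t|ξ|) f ξ dξ → (1/2) ∫ f` and `∫ sin²(t|ξ|) f ξ dξ → (1/2) ∫ f`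
as `|t| → ∞`. -/
theorem radial_trig_sq_equipartition (d : ℕ) (hd : 1 ≤ d)
    (f : EuclideanSpace ℝ (Fin d) → ℂ) (hf : Integrable f) :
    Tendsto (fun t : ℝ => ∫ ξ, ((Real.cos (t * ‖ξ‖)) ^ 2 : ℂ) * f ξ)
      (cocompact ℝ) (nhds ((1 / 2 : ℂ) * ∫ ξ, f ξ)) ∧
    Tendsto (fun t : ℝ => ∫ ξ, ((Real.sin (t * ‖ξ‖)) ^ 2 : ℂ) * f ξ)
      (cocompact ℝ) (nhds ((1 / 2 : ℂ) * ∫ ξ, f ξ)) := by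
  have : NeZero d := ⟨by omega⟩
  have hcos : Tendsto (fun t : ℝ ↦ ∫ ξ, Real.cos (2 * (t * ‖ξ‖)) • f ξ) (cocompact ℝ) (𝓝 0) := by
    simpa only [Function.comp_def, mul_assoc] using
      (tendsto_integral_cos_mul_norm_smul_cocompact volume hf).comp
        (tendsto_cocompact_mul_left₀ two_ne_zero)
  have hφ (t : ℝ) : AEMeasurable (fun ξ : EuclideanSpace ℝ (Fin d) ↦ t * ‖ξ‖) := by fun_prop
  have hhalf : (1 / 2 : ℂ) * ∫ ξ, f ξ = (2⁻¹ : ℝ) • ∫ ξ, f ξ := by simp [Complex.real_smul]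
  simp only [← Complex.ofReal_pow, ← Complex.real_smul, integral_cos_sq_smul (hφ _) hf,
    integral_sin_sq_smul (hφ _) hf, hhalf]
  constructor
  · simpa using tendsto_const_nhds.add (hcos.const_smul (2⁻¹ : ℝ))
  · simpa using tendsto_const_nhds.sub (hcos.const_smul (2⁻¹ : ℝ))
end

section
/- Abstract equipartition from the Riemann–Lebesgue property for a one-parameter unitary group: let H be a complex Hilbert space and R : ℝ → (H →L[ℂ] H) satisfy R(0) = id, R(t+s) = R(t) ∘ R(s) and R(t)* = R(−t) for all real t, s (so each R(t) is unitary). Assume the Riemann–Lebesgue property: for all x, y ∈ H, ⟨R(t)x, y⟩ → 0 as |t| → ∞. Define C(t) = (1/2)(R(t) + R(−t)) and S(t) = (2i)^{−1}(R(t) − R(−t)). Then for all x, y ∈ H: (i) ⟨C(τ)x, C(τ)y⟩ → (1/2)⟨x, y⟩ and ⟨S(τ)x, S(τ)y⟩ → (1/2)⟨x, y⟩ as |τ| → ∞; (ii) for fixed nonzero reals t, s with |t| ≠ |s|, ⟨C(τ t)x, C(τ s)y⟩ → 0 and ⟨S(τ t)x, S(τ s)y⟩ → 0 as τ → ∞.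 -/
/-!
Since `R` is a unitary group, `⟪R a x, R b y⟫ = ⟪R (a - b) x, y⟫`. Expanding the products then
gives the operator analogues of `cos a cos b = (cos (a - b) + cos (a + b)) / 2` and
`sin a sin b = (cos (a - b) - cos (a + b)) / 2` for correlations:
`⟪C a x, C b y⟫ = (⟪C (a - b) x, y⟫ + ⟪C (a + b) x, y⟫) / 2`, and likewise for `S`.
The Riemann–Lebesgue property passes from `R` to `C`, so a term `⟪C u x, y⟫` with `|u| → ∞`
tends to `0`. On the diagonal `a = b = τ` only `C 0 = 1` survives, with weight `1/2`; for
`a = τ t`, `b = τ s` with `|t| ≠ |s|`, both `τ (t - s)` and `τ (t + s)` go to infinity.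
-/

open Filter Topology
open scoped ComplexInnerProductSpace

theorem tendsto_mul_const_cocompact {G₀ : Type*} [TopologicalSpace G₀] [GroupWithZero G₀]
    [SeparatelyContinuousMul G₀] {c : G₀} (hc : c ≠ 0) :
    Tendsto (fun τ : G₀ => τ * c) (cocompact G₀) (cocompact G₀) :=
  (Homeomorph.mulRight₀ c hc).isClosedEmbedding.tendsto_cocompact

theorem tendsto_mul_const_atTop_cocompact {c : ℝ} (hc : c ≠ 0) :
    Tendsto (fun τ : ℝ => τ * c) atTop (cocompact ℝ) :=
  (tendsto_mul_const_cocompact hc).mono_left atTop_le_cocompact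

section OneParameterGroup

variable {H : Type*} [NormedAddCommGroup H] [InnerProductSpace ℂ H]

noncomputable def cosineFamily (R : ℝ → H →L[ℂ] H) (t : ℝ) : H →L[ℂ] H :=
  (1 / 2 : ℂ) • (R t + R (-t))

noncomputable def sineFamily (R : ℝ → H →L[ℂ] H) (t : ℝ) : H →L[ℂ] H :=
  (2 * Complex.I)⁻¹ • (R t - R (-t))

variable {R : ℝ → H →L[ℂ] H}

theorem cosineFamily_zero (hR0 : R 0 = ContinuousLinearMap.id ℂ H) :
    cosineFamily R 0 = ContinuousLinearMap.id ℂ H := by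
  rw [cosineFamily, neg_zero, hR0, ← two_smul ℂ, smul_smul]
  norm_num

theorem inner_cosineFamily_left (t : ℝ) (x y : H) :
    ⟪cosineFamily R t x, y⟫ = (1 / 2 : ℂ) * (⟪R t x, y⟫ + ⟪R (-t) x, y⟫) := by
  simp only [cosineFamily, smul_apply, add_apply, inner_smul_left, inner_add_left, map_div₀,
    map_one, map_ofNat]

theorem tendsto_inner_cosineFamily_cocompact
    (hRL : ∀ x y : H, Tendsto (fun t : ℝ => ⟪R t x, y⟫) (cocompact ℝ) (𝓝 0)) (x y : H) :
    Tendsto (fun t : ℝ => ⟪cosineFamily R t x, y⟫) (cocompact ℝ) (𝓝 0) := by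
  have hneg := (hRL x y).comp (Homeomorph.neg ℝ).isClosedEmbedding.tendsto_cocompact
  simpa only [inner_cosineFamily_left, Function.comp_def, Homeomorph.coe_neg, add_zero,
    mul_zero] using
    ((hRL x y).add hneg).const_mul (1 / 2 : ℂ)

variable [CompleteSpace H]

theorem inner_apply_apply_eq_inner_sub (hRadd : ∀ t s : ℝ, R (t + s) = (R t).comp (R s))
    (hRstar : ∀ t : ℝ, ContinuousLinearMap.adjoint (R t) = R (-t)) (a b : ℝ) (x y : H) :
    ⟪R a x, R b y⟫ = ⟪R (a - b) x, y⟫ := by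
  rw [← ContinuousLinearMap.adjoint_inner_left, hRstar, sub_eq_neg_add, hRadd,
    ContinuousLinearMap.comp_apply]

theorem inner_cosineFamily_cosineFamily (hRadd : ∀ t s : ℝ, R (t + s) = (R t).comp (R s))
    (hRstar : ∀ t : ℝ, ContinuousLinearMap.adjoint (R t) = R (-t)) (a b : ℝ) (x y : H) :
    ⟪cosineFamily R a x, cosineFamily R b y⟫ =
      (1 / 2 : ℂ) * (⟪cosineFamily R (a - b) x, y⟫ + ⟪cosineFamily R (a + b) x, y⟫) := by
  simp only [inner_cosineFamily_left]
  simp only [cosineFamily, smul_apply, add_apply, inner_smul_right, inner_add_right,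
    inner_apply_apply_eq_inner_sub hRadd hRstar]
  rw [show a - -b = a + b by ring, show -a - b = -(a + b) by ring,
    show -a - -b = -(a - b) by ring]
  ring

theorem inner_sineFamily_sineFamily (hRadd : ∀ t s : ℝ, R (t + s) = (R t).comp (R s))
    (hRstar : ∀ t : ℝ, ContinuousLinearMap.adjoint (R t) = R (-t)) (a b : ℝ) (x y : H) :
    ⟪sineFamily R a x, sineFamily R b y⟫ =
      (1 / 2 : ℂ) * (⟪cosineFamily R (a - b) x, y⟫ - ⟪cosineFamily R (a + b) x, y⟫) := by
  simp only [inner_cosineFamily_left]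
  simp only [sineFamily, smul_apply, sub_apply, inner_smul_left,
    inner_smul_right, inner_sub_left, inner_sub_right,
    inner_apply_apply_eq_inner_sub hRadd hRstar]
  rw [show a - -b = a + b by ring, show -a - b = -(a + b) by ring,
    show -a - -b = -(a - b) by ring]
  have hconj : starRingEnd ℂ (2 * Complex.I)⁻¹ * (2 * Complex.I)⁻¹ = 1 / 4 := by
    simp only [map_inv₀, map_mul, Complex.conj_I, map_ofNat]
    field_simp
    norm_num
  linear_combination (⟪R (a - b) x, y⟫ - ⟪R (a + b) x, y⟫ - ⟪R (-(a + b)) x, y⟫ +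
    ⟪R (-(a - b)) x, y⟫) * hconj

end OneParameterGroup

/-- **Abstract equipartition from the Riemann–Lebesgue property of a one-parameter unitary
group.** Let `R : ℝ → (H →L[ℂ] H)` be a one-parameter group of unitary operators
(`R 0 = id`, `R (t+s) = R t ∘ R s`, `R t * = R (−t)`) on a complex Hilbert space satisfying
the Riemann–Lebesgue property `⟪R t x, y⟫ → 0` as `|t| → ∞`. With
`C t = (1/2)(R t + R (−t))` and `S t = (2i)⁻¹(R t − R (−t))`:
(i) `⟪C τ x, C τ y⟫ → (1/2)⟪x,y⟫` and `⟪S τ x, S τ y⟫ → (1/2)⟪x,y⟫` as `|τ| → ∞`;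
(ii) for fixed nonzero `t, s` with `|t| ≠ |s|`, `⟪C (τt) x, C (τs) y⟫ → 0` and
`⟪S (τt) x, S (τs) y⟫ → 0` as `τ → ∞`. -/
theorem abstract_equipartition_of_riemann_lebesgue
    {H : Type*} [NormedAddCommGroup H] [InnerProductSpace ℂ H] [CompleteSpace H]
    (R : ℝ → H →L[ℂ] H)
    (hR0 : R 0 = ContinuousLinearMap.id ℂ H)
    (hRadd : ∀ t s : ℝ, R (t + s) = (R t).comp (R s))
    (hRstar : ∀ t : ℝ, ContinuousLinearMap.adjoint (R t) = R (-t))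
    (hRL : ∀ x y : H, Tendsto (fun t : ℝ => ⟪R t x, y⟫) (cocompact ℝ) (nhds 0)) :
    (∀ x y : H,
      Tendsto (fun τ : ℝ =>
          ⟪((1 / 2 : ℂ) • (R τ + R (-τ))) x, ((1 / 2 : ℂ) • (R τ + R (-τ))) y⟫)
        (cocompact ℝ) (nhds ((1 / 2 : ℂ) * ⟪x, y⟫)) ∧
      Tendsto (fun τ : ℝ =>
          ⟪((2 * Complex.I)⁻¹ • (R τ - R (-τ))) x,
            ((2 * Complex.I)⁻¹ • (R τ - R (-τ))) y⟫)
        (cocompact ℝ) (nhds ((1 / 2 : ℂ) * ⟪x, y⟫))) ∧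
    (∀ x y : H, ∀ t s : ℝ, t ≠ 0 → s ≠ 0 → |t| ≠ |s| →
      Tendsto (fun τ : ℝ =>
          ⟪((1 / 2 : ℂ) • (R (τ * t) + R (-(τ * t)))) x,
            ((1 / 2 : ℂ) • (R (τ * s) + R (-(τ * s)))) y⟫)
        atTop (nhds 0) ∧
      Tendsto (fun τ : ℝ =>
          ⟪((2 * Complex.I)⁻¹ • (R (τ * t) - R (-(τ * t)))) x,
            ((2 * Complex.I)⁻¹ • (R (τ * s) - R (-(τ * s)))) y⟫)
        atTop (nhds 0)) := by
  have hC := tendsto_inner_cosineFamily_cocompact hRL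
  have hCC := inner_cosineFamily_cosineFamily hRadd hRstar
  have hSS := inner_sineFamily_sineFamily hRadd hRstar
  refine ⟨fun x y => ?_, fun x y t s _ _ hts => ?_⟩
  · have hC0 : ⟪cosineFamily R 0 x, y⟫ = ⟪x, y⟫ := by
      rw [cosineFamily_zero hR0, ContinuousLinearMap.id_apply]
    have hdouble := (hC x y).comp (tendsto_mul_const_cocompact two_ne_zero)
    constructor
    · show Tendsto (fun τ => ⟪cosineFamily R τ x, cosineFamily R τ y⟫) _ _
      simp only [hCC, sub_self, hC0, ← mul_two]
      simpa only [add_zero, Function.comp_apply] using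
        (hdouble.const_add ⟪x, y⟫).const_mul (1 / 2 : ℂ)
    · show Tendsto (fun τ => ⟪sineFamily R τ x, sineFamily R τ y⟫) _ _
      simp only [hSS, sub_self, hC0, ← mul_two]
      simpa only [sub_zero, Function.comp_apply] using
        (hdouble.const_sub ⟪x, y⟫).const_mul (1 / 2 : ℂ)
  · have hdiff := (hC x y).comp (tendsto_mul_const_atTop_cocompact (c := t - s)
      (sub_ne_zero.2 fun h => hts (by rw [h])))
    have hsum := (hC x y).comp (tendsto_mul_const_atTop_cocompact (c := t + s) fun h =>
      hts (by rw [eq_neg_of_add_eq_zero_left h, abs_neg]))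
    constructor
    · show Tendsto (fun τ => ⟪cosineFamily R (τ * t) x, cosineFamily R (τ * s) y⟫) _ _
      simp only [hCC, ← mul_sub, ← mul_add]
      simpa only [add_zero, mul_zero, Function.comp_apply] using
        (hdiff.add hsum).const_mul (1 / 2 : ℂ)
    · show Tendsto (fun τ => ⟪sineFamily R (τ * t) x, sineFamily R (τ * s) y⟫) _ _
      simp only [hSS, ← mul_sub, ← mul_add]
      simpa only [sub_zero, mul_zero, Function.comp_apply] using
        (hdiff.sub hsum).const_mul (1 / 2 : ℂ)
end

section
/- Vanishing of the off-diagonal rescaled covariance (Example 4.6): let g : ℝ → ℂ be integrable, a > 0, and 0 ≤ s < t. Then ∫_ℝ ( ∫_0^s sin( δ^{−1}(t − r) a |ξ| ) · sin( δ^{−1}(s − r) a |ξ| ) dr ) g(ξ) dξ → 0 as δ → 0⁺. -/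
/-!
For `ξ ≠ 0` the time integral has a closed form: with `c = δ⁻¹ a ξ` it equals
`s/2 · cos (c (t - s))` plus a remainder bounded both by `|s|/2` and by `1/(2|c|)`.
As `δ → 0⁺` the integral of the cosine term against `g` vanishes by the Riemann–Lebesgue lemma
(because `t ≠ s`), and that of the remainder by dominated convergence. The `|ξ|` may be replaced
by `ξ` because the time integral is even in the frequency.
-/

open MeasureTheory Filter intervalIntegral Real
open scoped Topology FourierTransform

theorem abs_sin_mul_sub_sin_mul_div_le (c x y : ℝ) :
    |(sin (c * x) - sin (c * y)) / c| ≤ |x - y| := by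
  rcases eq_or_ne c 0 with rfl | hc
  · simp
  rw [abs_div, div_le_iff₀ (abs_pos.2 hc), ← abs_mul, sub_mul, mul_comm x, mul_comm y]
  exact abs_sin_sub_sin_le _ _

theorem abs_sin_sub_sin_div_le (x y c : ℝ) : |(sin x - sin y) / c| ≤ 2 / |c| := by
  rw [abs_div]
  gcongr
  calc |sin x - sin y| ≤ |sin x| + |sin y| := abs_sub _ _
    _ ≤ 1 + 1 := add_le_add (abs_sin_le_one x) (abs_sin_le_one y)
    _ = 2 := one_add_one_eq_two

-- The inner time integral of the theorem, at frequency `c = δ⁻¹ a |ξ|`.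
noncomputable def sinSinKernel (s t c : ℝ) : ℝ :=
  ∫ r in (0 : ℝ)..s, sin (c * (t - r)) * sin (c * (s - r))

theorem sinSinKernel_mul_abs (s t w x : ℝ) :
    sinSinKernel s t (w * |x|) = sinSinKernel s t (w * x) := by
  rcases abs_choice x with h | h
  · rw [h]
  · simp only [sinSinKernel, h, mul_neg, neg_mul, sin_neg, neg_neg]

theorem sinSinKernel_eq (s t : ℝ) {c : ℝ} (hc : c ≠ 0) :
    sinSinKernel s t c =
      s / 2 * cos (c * (t - s)) + (sin (c * (t - s)) - sin (c * (t + s))) / c / 4 := by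
  have hderiv (r : ℝ) : HasDerivAt
      (fun r ↦ r / 2 * cos (c * (t - s)) + sin (c * (t + s) - 2 * c * r) / c / 4)
      (sin (c * (t - r)) * sin (c * (s - r))) r := by
    have hlin : HasDerivAt (fun r ↦ c * (t + s) - 2 * c * r) (-(2 * c)) r := by
      simpa using ((hasDerivAt_id r).const_mul (2 * c)).const_sub (c * (t + s))
    refine ((((hasDerivAt_id r).div_const 2).mul_const (cos (c * (t - s)))).add
      ((hlin.sin.div_const c).div_const 4)).congr_deriv ?_
    rw [show c * (t + s) - 2 * c * r = c * (t - r) + c * (s - r) by ring,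
      show c * (t - s) = c * (t - r) - c * (s - r) by ring, cos_add, cos_sub]
    field_simp
    ring
  rw [sinSinKernel, integral_eq_sub_of_hasDerivAt (fun r _ ↦ hderiv r)
    (Continuous.intervalIntegrable (by fun_prop) _ _)]
  ring_nf

section

variable {E : Type*} [NormedAddCommGroup E] [NormedSpace ℂ E] {f : ℝ → E}

theorem integral_cos_smul_eq_fourier (hf : Integrable f) (w : ℝ) :
    ∫ v, cos (2 * π * w * v) • f v = (2 : ℂ)⁻¹ • (𝓕 f w + 𝓕 f (-w)) := by
  have hint (w : ℝ) : Integrable fun v ↦ 𝐞 (-(v * w)) • f v := by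
    simpa [mul_comm] using (Real.fourierIntegral_convergent_iff w).2 hf
  rw [Real.fourier_real_eq, Real.fourier_real_eq, ← integral_add (hint w) (hint (-w)),
    ← MeasureTheory.integral_smul]
  congr 1 with v
  rw [RCLike.real_smul_eq_coe_smul (K := ℂ), Circle.smul_def, Circle.smul_def, ← add_smul,
    smul_smul]
  congr 1
  change (cos _ : ℂ) = _
  rw [fourierChar_apply, fourierChar_apply, Complex.ofReal_cos, Complex.cos]
  push_cast
  ring_nf

theorem tendsto_integral_cos_mul_smul_cocompact (hf : Integrable f) :
    Tendsto (fun w ↦ ∫ v, cos (w * v) • f v) (cocompact ℝ) (𝓝 0) := by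
  have hscale : Tendsto (fun w : ℝ ↦ w * (2 * π)⁻¹) (cocompact ℝ) (cocompact ℝ) :=
    (Homeomorph.mulRight₀ _ (by positivity)).toCocompactMap.cocompact_tendsto'
  have hneg : Tendsto (fun w : ℝ ↦ -w) (cocompact ℝ) (cocompact ℝ) :=
    (Homeomorph.neg ℝ).toCocompactMap.cocompact_tendsto'
  have hRL := zero_at_infty_fourier f
  refine ((((hRL.add (hRL.comp hneg)).const_smul (2 : ℂ)⁻¹).comp hscale).congr fun w ↦ ?_).trans
    (by simp)
  refine (integral_cos_smul_eq_fourier hf _).symm.trans ?_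
  congr 1 with v
  field_simp

theorem tendsto_integral_sin_mul_sub_sin_mul_div_smul_cocompact (x y : ℝ) (hf : Integrable f) :
    Tendsto (fun w ↦ ∫ v, ((sin (w * v * x) - sin (w * v * y)) / (w * v)) • f v)
      (cocompact ℝ) (𝓝 0) := by
  have hmeas (w : ℝ) :
      AEStronglyMeasurable (fun v ↦ ((sin (w * v * x) - sin (w * v * y)) / (w * v)) • f v) :=
    (Measurable.aestronglyMeasurable
      (f := fun v ↦ (sin (w * v * x) - sin (w * v * y)) / (w * v)) (by fun_prop)).smul hf.1
  have hbound (w v : ℝ) :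
      ‖((sin (w * v * x) - sin (w * v * y)) / (w * v)) • f v‖ ≤ |x - y| * ‖f v‖ := by
    rw [norm_smul, norm_eq_abs]
    exact mul_le_mul_of_nonneg_right (abs_sin_mul_sub_sin_mul_div_le _ _ _) (norm_nonneg _)
  have hlim : ∀ᵐ v, Tendsto (fun w ↦ ((sin (w * v * x) - sin (w * v * y)) / (w * v)) • f v)
      (cocompact ℝ) (𝓝 0) := by
    filter_upwards [Measure.ae_ne volume 0] with v hv
    have habs : Tendsto (fun w : ℝ ↦ |w * v|) (cocompact ℝ) atTop := by
      simpa only [abs_mul, norm_eq_abs] using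
        (tendsto_norm_cocompact_atTop (E := ℝ)).atTop_mul_const (abs_pos.2 hv)
    have hdecay : Tendsto (fun w : ℝ ↦ 2 / |w * v| * ‖f v‖) (cocompact ℝ) (𝓝 0) := by
      simpa only [div_eq_mul_inv, Pi.inv_apply, mul_zero, zero_mul] using
        (habs.inv_tendsto_atTop.const_mul 2).mul_const ‖f v‖
    refine squeeze_zero_norm (fun w ↦ ?_) hdecay
    rw [norm_smul, norm_eq_abs]
    exact mul_le_mul_of_nonneg_right (abs_sin_sub_sin_div_le _ _ _) (norm_nonneg _)
  -- dominated convergence along a filter needs it to be countably generated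
  have : (cocompact ℝ).IsCountablyGenerated := by
    rw [cocompact_eq_atBot_atTop]
    infer_instance
  simpa using tendsto_integral_filter_of_dominated_convergence _ (.of_forall hmeas)
    (.of_forall fun w ↦ .of_forall (hbound w)) (hf.norm.const_mul _) hlim

theorem tendsto_integral_sinSinKernel_mul_smul_cocompact {s t : ℝ} (hst : s ≠ t)
    (hf : Integrable f) :
    Tendsto (fun w ↦ ∫ v, sinSinKernel s t (w * v) • f v) (cocompact ℝ) (𝓝 0) := by
  have hcos : Tendsto (fun w ↦ ∫ v, cos (w * (t - s) * v) • f v) (cocompact ℝ) (𝓝 0) :=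
    (tendsto_integral_cos_mul_smul_cocompact hf).comp
      (Homeomorph.mulRight₀ _ (sub_ne_zero.2 hst.symm)).toCocompactMap.cocompact_tendsto'
  have hrem := tendsto_integral_sin_mul_sub_sin_mul_div_smul_cocompact (t - s) (t + s) hf
  have hsum := (hcos.const_smul (s / 2)).add (hrem.const_smul (4⁻¹ : ℝ))
  rw [smul_zero, smul_zero, add_zero] at hsum
  refine hsum.congr' ?_
  filter_upwards [(isCompact_singleton (x := (0 : ℝ))).compl_mem_cocompact] with w hw
  have hint_cos : Integrable fun v ↦ cos (w * (t - s) * v) • f v :=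
    hf.bdd_smul (φ := fun v ↦ cos (w * (t - s) * v)) 1 (by fun_prop)
      (.of_forall fun v ↦ abs_cos_le_one _)
  have hint_rem :
      Integrable fun v ↦ ((sin (w * v * (t - s)) - sin (w * v * (t + s))) / (w * v)) • f v :=
    hf.bdd_smul (φ := fun v ↦ (sin (w * v * (t - s)) - sin (w * v * (t + s))) / (w * v))
      _ (Measurable.aestronglyMeasurable (by fun_prop))
      (.of_forall fun v ↦ abs_sin_mul_sub_sin_mul_div_le _ _ _)
  rw [← MeasureTheory.integral_smul, ← MeasureTheory.integral_smul,
    ← integral_add (by exact hint_cos.smul (s / 2)) (by exact hint_rem.smul (4⁻¹ : ℝ))]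
  refine integral_congr_ae ?_
  filter_upwards [Measure.ae_ne volume 0] with v hv
  rw [sinSinKernel_eq s t (mul_ne_zero hw hv), add_smul, smul_smul, smul_smul,
    mul_right_comm w v]
  congr 2
  ring

end

theorem offdiagonal_rescaled_covariance_vanishes_general (g : ℝ → ℂ) (hg : Integrable g)
    (a : ℝ) (ha : 0 < a) (s t : ℝ) (hst : s < t) :
    Tendsto (fun δ : ℝ => ∫ ξ : ℝ,
        (((∫ r in (0 : ℝ)..s,
            Real.sin (δ⁻¹ * (t - r) * a * |ξ|) * Real.sin (δ⁻¹ * (s - r) * a * |ξ|)) : ℝ) : ℂ)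
          * g ξ)
      (nhdsWithin 0 (Set.Ioi 0)) (nhds 0) := by
  have hfreq : Tendsto (fun δ : ℝ ↦ δ⁻¹ * a) (nhdsWithin 0 (Set.Ioi 0)) (cocompact ℝ) :=
    (tendsto_inv_nhdsGT_zero.atTop_mul_const ha).mono_right atTop_le_cocompact
  refine ((tendsto_integral_sinSinKernel_mul_smul_cocompact hst.ne hg).comp hfreq).congr
    fun δ ↦ integral_congr_ae (.of_forall fun ξ ↦ ?_)
  dsimp only
  rw [Complex.real_smul, ← sinSinKernel_mul_abs, sinSinKernel]
  congr 3 with r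
  ring_nf

/-- **Vanishing of the off-diagonal rescaled covariance (Example 4.6).** For integrable
`g : ℝ → ℂ`, `a > 0` and `0 ≤ s < t`:
`∫_ℝ (∫₀ˢ sin(δ⁻¹(t−r)a|ξ|) sin(δ⁻¹(s−r)a|ξ|) dr) g(ξ) dξ → 0` as `δ → 0⁺`. -/
theorem offdiagonal_rescaled_covariance_vanishes (g : ℝ → ℂ) (hg : Integrable g)
    (a : ℝ) (ha : 0 < a) (s t : ℝ) (hs : 0 ≤ s) (hst : s < t) :
    Tendsto (fun δ : ℝ => ∫ ξ : ℝ,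
        (((∫ r in (0 : ℝ)..s,
            Real.sin (δ⁻¹ * (t - r) * a * |ξ|) * Real.sin (δ⁻¹ * (s - r) * a * |ξ|)) : ℝ) : ℂ)
          * g ξ)
      (nhdsWithin 0 (Set.Ioi 0)) (nhds 0) :=
  offdiagonal_rescaled_covariance_vanishes_general g hg a ha s t hst
end

section
/- Vanishing of the variance of the rescaled observed Fisher information (equation (4.14), analytic form): let g : ℝ → ℂ be integrable, a > 0 and T > 0. For δ > 0 define Φ_δ(t, s) = ∫_ℝ ( ∫_0^{min(t,s)} sin( δ^{−1}(t − r) a |ξ| ) · sin( δ^{−1}(s − r) a |ξ| ) dr ) g(ξ) dξ. Then ∫_0^T ∫_0^T |Φ_δ(t, s)|² ds dt → 0 as δ → 0⁺. -/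
/-!
By product-to-sum, `∫₀^m sin(A(t-r)) sin(A(s-r)) dr = (m/2) cos(A(t-s)) + O(1/|A|)`.
With `A = δ⁻¹ a |ξ|` the error term is `O(δ/|ξ|)`, so its contribution to `Φ_δ(t,s)` vanishes
by dominated convergence, while the main term integrates against `g` to Fourier transforms of `g`
at frequencies `±δ⁻¹ a (t-s)/(2π)`, which vanish for `t ≠ s` by the Riemann–Lebesgue lemma.
Thus `Φ_δ → 0` off the diagonal, and since `|Φ_δ(t,s)| ≤ |T| ∫|g|` on the square, dominated
convergence applies twice more.
-/

open MeasureTheory Filter intervalIntegral Real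
open scoped FourierTransform Topology Interval

theorem integral_sin_mul_sin {A : ℝ} (hA : A ≠ 0) (t s m : ℝ) :
    ∫ r in (0 : ℝ)..m, sin (A * (t - r)) * sin (A * (s - r)) =
      m / 2 * cos (A * (t - s)) +
        (sin (A * (t + s) - 2 * A * m) - sin (A * (t + s))) / (4 * A) := by
  have hderiv (r : ℝ) : HasDerivAt
      (fun r => r / 2 * cos (A * (t - s)) + sin (A * (t + s) - 2 * A * r) / (4 * A))
      (sin (A * (t - r)) * sin (A * (s - r))) r := by
    refine ((((hasDerivAt_id r).div_const 2).mul_const _).add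
      ((((hasDerivAt_id r).const_mul (2 * A)).const_sub _).sin.div_const _)).congr_deriv ?_
    have hprod : 2 * sin (A * (t - r)) * sin (A * (s - r)) =
        cos (A * (t - s)) - cos (A * (t + s) - 2 * A * r) := by
      rw [two_mul_sin_mul_sin]; ring_nf
    rw [id, mul_div_assoc, show -(2 * A * 1) / (4 * A) = -(1 / 2) by field_simp; ring]
    linear_combination (-1 / 2 : ℝ) * hprod
  rw [integral_eq_sub_of_hasDerivAt (fun r _ => hderiv r)
    (by apply Continuous.intervalIntegrable; fun_prop), mul_zero, sub_zero]
  ring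

theorem abs_integral_sin_mul_sin_sub_half_cos_le {A : ℝ} (hA : A ≠ 0) (t s m : ℝ) :
    |(∫ r in (0 : ℝ)..m, sin (A * (t - r)) * sin (A * (s - r))) - m / 2 * cos (A * (t - s))|
      ≤ (2 * |A|)⁻¹ := by
  rw [integral_sin_mul_sin hA, add_sub_cancel_left, abs_div, abs_mul,
    abs_of_pos (four_pos : (0 : ℝ) < 4), div_le_iff₀ (by positivity)]
  calc |sin (A * (t + s) - 2 * A * m) - sin (A * (t + s))| ≤ 1 + 1 :=
        (abs_sub _ _).trans (add_le_add (abs_sin_le_one _) (abs_sin_le_one _))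
    _ = (2 * |A|)⁻¹ * (4 * |A|) := by field_simp; norm_num

noncomputable def sinSinIntegral (A t s : ℝ) : ℝ :=
  ∫ r in (0 : ℝ)..min t s, sin (A * (t - r)) * sin (A * (s - r))

theorem abs_sinSinIntegral_le (A t s : ℝ) : |sinSinIntegral A t s| ≤ |min t s| := by
  unfold sinSinIntegral
  simpa using norm_integral_le_of_norm_le_const (a := 0) (b := min t s) (C := 1)
    (f := fun r => sin (A * (t - r)) * sin (A * (s - r))) fun r _ => by
      simpa [abs_mul] using mul_le_one₀ (abs_sin_le_one _) (abs_nonneg _) (abs_sin_le_one _)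

@[fun_prop]
theorem Continuous.sinSinIntegral {X : Type*} [TopologicalSpace X] {A t s : X → ℝ}
    (hA : Continuous A) (ht : Continuous t) (hs : Continuous s) :
    Continuous fun x => sinSinIntegral (A x) (t x) (s x) := by
  unfold _root_.sinSinIntegral
  fun_prop

theorem integrable_exp_ofReal_mul_I_mul {g : ℝ → ℂ} (hg : Integrable g) {f : ℝ → ℝ}
    (hf : Continuous f) : Integrable fun v => Complex.exp (f v * Complex.I) * g v :=
  hg.bdd_mul (c := 1) (by fun_prop) (ae_of_all _ fun v => (Complex.norm_exp_ofReal_mul_I _).le)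

theorem integral_cos_mul_eq_fourier {g : ℝ → ℂ} (hg : Integrable g) (w : ℝ) :
    ∫ v, (cos (w * v) : ℂ) * g v = (𝓕 g (w / (2 * π)) + 𝓕 g (-(w / (2 * π)))) / 2 := by
  simp only [fourier_real_eq_integral_exp_smul, smul_eq_mul]
  rw [← integral_add (integrable_exp_ofReal_mul_I_mul hg (by fun_prop))
    (integrable_exp_ofReal_mul_I_mul hg (by fun_prop)), ← MeasureTheory.integral_div]
  congr 1 with v
  have h1 : -2 * π * v * (w / (2 * π)) = -(w * v) := by field_simp
  have h2 : -2 * π * v * -(w / (2 * π)) = w * v := by field_simp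
  rw [h1, h2, Complex.ofReal_cos, Complex.cos]
  push_cast
  ring

theorem tendsto_integral_cos_mul_cocompact {g : ℝ → ℂ} (hg : Integrable g) :
    Tendsto (fun w => ∫ v, (cos (w * v) : ℂ) * g v) (cocompact ℝ) (𝓝 0) := by
  have hscale : Tendsto (fun w : ℝ => w / (2 * π)) (cocompact ℝ) (cocompact ℝ) :=
    (Homeomorph.mulRight₀ (2 * π)⁻¹ (by positivity)).map_cocompact.le
  have hneg : Tendsto (fun w : ℝ => -w) (cocompact ℝ) (cocompact ℝ) :=
    (Homeomorph.neg ℝ).map_cocompact.le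
  have h := ((zero_at_infty_fourier g).comp hscale).add
    ((zero_at_infty_fourier g).comp (hneg.comp hscale))
  simp only [integral_cos_mul_eq_fourier hg]
  simpa using h.div_const 2

theorem tendsto_inv_mul_cocompact {c : ℝ} (hc : c ≠ 0) :
    Tendsto (fun δ : ℝ => δ⁻¹ * c) (𝓝[>] 0) (cocompact ℝ) :=
  have hscale : Tendsto (· * c) (cocompact ℝ) (cocompact ℝ) :=
    (Homeomorph.mulRight₀ c hc).map_cocompact.le
  hscale.comp (tendsto_inv_nhdsGT_zero.mono_right atTop_le_cocompact)

theorem tendsto_integral_ofReal_mul_of_abs_le {α ι : Type*} [MeasurableSpace α] {μ : Measure α}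
    {l : Filter ι} [l.IsCountablyGenerated] {F : ι → α → ℝ} {f : α → ℝ} {g : α → ℂ} {C : ℝ}
    (hg : Integrable g μ) (hF_meas : ∀ᶠ i in l, AEStronglyMeasurable (F i) μ)
    (hF_bound : ∀ᶠ i in l, ∀ᵐ x ∂μ, |F i x| ≤ C)
    (hF_lim : ∀ᵐ x ∂μ, Tendsto (F · x) l (𝓝 (f x))) :
    Tendsto (fun i => ∫ x, (F i x : ℂ) * g x ∂μ) l (𝓝 (∫ x, (f x : ℂ) * g x ∂μ)) := by
  refine tendsto_integral_filter_of_dominated_convergence (fun x => C * ‖g x‖)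
    (hF_meas.mono fun i hi => (Complex.continuous_ofReal.comp_aestronglyMeasurable hi).mul
      hg.aestronglyMeasurable) (hF_bound.mono fun i hi => hi.mono fun x hx => ?_)
    (hg.norm.const_mul C) (hF_lim.mono fun x hx => ?_)
  · rw [norm_mul, Complex.norm_real, Real.norm_eq_abs]
    exact mul_le_mul_of_nonneg_right hx (norm_nonneg _)
  · exact ((Complex.continuous_ofReal.tendsto _).comp hx).mul_const _

theorem intervalIntegral.tendsto_integral_filter_of_norm_le_const {ι E : Type*}
    [NormedAddCommGroup E] [NormedSpace ℝ E] {l : Filter ι} [l.IsCountablyGenerated]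
    {F : ι → ℝ → E} {f : ℝ → E} {a b C : ℝ}
    (hF_meas : ∀ᶠ i in l, AEStronglyMeasurable (F i) (volume.restrict (Ι a b)))
    (hF_bound : ∀ᶠ i in l, ∀ x ∈ Ι a b, ‖F i x‖ ≤ C)
    (hF_lim : ∀ᵐ x, x ∈ Ι a b → Tendsto (F · x) l (𝓝 (f x))) :
    Tendsto (fun i => ∫ x in a..b, F i x) l (𝓝 (∫ x in a..b, f x)) :=
  tendsto_integral_filter_of_dominated_convergence (fun _ => C) hF_meas
    (hF_bound.mono fun _ hi => ae_of_all _ hi) intervalIntegrable_const hF_lim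

/-- `Φ_δ(t, s)`. -/
noncomputable def rescaledCovariance (g : ℝ → ℂ) (a δ t s : ℝ) : ℂ :=
  ∫ ξ, (sinSinIntegral (δ⁻¹ * a * |ξ|) t s : ℂ) * g ξ

theorem rescaledCovariance_eq (g : ℝ → ℂ) (a δ t s : ℝ) :
    rescaledCovariance g a δ t s = ∫ ξ : ℝ, (((∫ r in (0 : ℝ)..(min t s),
      sin (δ⁻¹ * (t - r) * a * |ξ|) * sin (δ⁻¹ * (s - r) * a * |ξ|)) : ℝ) : ℂ) * g ξ := by
  simp only [rescaledCovariance, sinSinIntegral]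
  congr 1 with ξ
  congr 3 with r
  ring_nf

section RescaledCovariance

variable {g : ℝ → ℂ}

theorem norm_rescaledCovariance_le (hg : Integrable g) (a δ t s : ℝ) :
    ‖rescaledCovariance g a δ t s‖ ≤ |min t s| * ∫ ξ, ‖g ξ‖ := by
  rw [← MeasureTheory.integral_const_mul]
  refine norm_integral_le_of_norm_le (hg.norm.const_mul _) (ae_of_all _ fun ξ => ?_)
  rw [norm_mul, Complex.norm_real, Real.norm_eq_abs]
  exact mul_le_mul_of_nonneg_right (abs_sinSinIntegral_le _ t s) (norm_nonneg _)

theorem continuous_rescaledCovariance (hg : Integrable g) (a δ : ℝ) :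
    Continuous fun p : ℝ × ℝ => rescaledCovariance g a δ p.1 p.2 := by
  have hmin (p : ℝ × ℝ) : |min p.1 p.2| ≤ ‖p‖ := by
    rcases min_choice p.1 p.2 with h | h <;> rw [h, ← Real.norm_eq_abs]
    exacts [norm_fst_le p, norm_snd_le p]
  refine continuous_iff_continuousAt.2 fun p₀ => continuousAt_of_dominated
    (bound := fun ξ => (‖p₀‖ + 1) * ‖g ξ‖) (Eventually.of_forall fun p => ?_) ?_
    (hg.norm.const_mul _) (ae_of_all _ fun ξ => ?_)
  · exact (by fun_prop : Continuous _).aestronglyMeasurable.mul hg.aestronglyMeasurable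
  · filter_upwards [(continuous_norm.tendsto p₀).eventually (gt_mem_nhds (lt_add_one ‖p₀‖))]
      with p hp
    refine ae_of_all _ fun ξ => ?_
    rw [norm_mul, Complex.norm_real, Real.norm_eq_abs]
    exact mul_le_mul_of_nonneg_right
      ((abs_sinSinIntegral_le _ _ _).trans ((hmin p).trans hp.le)) (norm_nonneg _)
  · exact (by fun_prop : Continuous _).continuousAt

theorem tendsto_rescaledCovariance_of_ne (hg : Integrable g) {a : ℝ} (ha : a ≠ 0) {t s : ℝ}
    (hts : t ≠ s) : Tendsto (fun δ => rescaledCovariance g a δ t s) (𝓝[>] 0) (𝓝 0) := by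
  set m := min t s
  set R : ℝ → ℝ → ℝ := fun δ ξ =>
    sinSinIntegral (δ⁻¹ * a * |ξ|) t s - m / 2 * cos (δ⁻¹ * a * |ξ| * (t - s))
  have hcos (δ ξ : ℝ) : cos (δ⁻¹ * a * |ξ| * (t - s)) = cos (δ⁻¹ * (a * (t - s)) * ξ) := by
    rw [show δ⁻¹ * a * |ξ| * (t - s) = δ⁻¹ * (a * (t - s)) * |ξ| by ring]
    rcases abs_choice ξ with h | h <;> simp only [h, mul_neg, cos_neg]
  have hR_le (δ ξ : ℝ) : |R δ ξ| ≤ |m| + |m| / 2 := by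
    refine (abs_sub _ _).trans (add_le_add (abs_sinSinIntegral_le _ t s) ?_)
    rw [abs_mul, abs_div, abs_two]
    exact mul_le_of_le_one_right (by positivity) (abs_cos_le_one _)
  have hR_lim : ∀ᵐ ξ, Tendsto (R · ξ) (𝓝[>] 0) (𝓝 0) := by
    filter_upwards [Measure.ae_ne volume 0] with ξ hξ
    have hlin : Tendsto (fun δ : ℝ => δ * (2 * (|a| * |ξ|))⁻¹) (𝓝[>] 0) (𝓝 0) :=
      ((continuous_mul_const _).tendsto' 0 0 (zero_mul _)).mono_left nhdsWithin_le_nhds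
    refine squeeze_zero_norm' (eventually_mem_nhdsWithin.mono fun δ (hδ : 0 < δ) => ?_) hlin
    have hA : δ⁻¹ * a * |ξ| ≠ 0 := by positivity
    rw [Real.norm_eq_abs]
    refine (abs_integral_sin_mul_sin_sub_half_cos_le hA t s m).trans_eq ?_
    rw [abs_mul, abs_mul, abs_inv, abs_abs, abs_of_pos hδ]
    field_simp
  have hsplit (δ : ℝ) : rescaledCovariance g a δ t s =
      (m / 2 : ℂ) * (∫ ξ, (cos (δ⁻¹ * (a * (t - s)) * ξ) : ℂ) * g ξ) +
        ∫ ξ, (R δ ξ : ℂ) * g ξ := by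
    have hint (f : ℝ → ℝ) (hf : Continuous f) (C : ℝ) (hC : ∀ ξ, |f ξ| ≤ C) :
        Integrable fun ξ => (f ξ : ℂ) * g ξ :=
      hg.bdd_mul (c := C) (by fun_prop) (ae_of_all _ fun ξ => by simpa using hC ξ)
    rw [← MeasureTheory.integral_const_mul, ← MeasureTheory.integral_add
      ((hint _ (by fun_prop) 1 fun ξ => abs_cos_le_one _).const_mul _)
      (hint _ (by fun_prop) _ (hR_le δ))]
    refine integral_congr_ae (ae_of_all _ fun ξ => ?_)
    simp only [R, hcos]
    push_cast
    ring
  have hmain : Tendsto (fun δ => ∫ ξ, (cos (δ⁻¹ * (a * (t - s)) * ξ) : ℂ) * g ξ) (𝓝[>] 0)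
      (𝓝 0) :=
    (tendsto_integral_cos_mul_cocompact hg).comp
      (tendsto_inv_mul_cocompact (mul_ne_zero ha (sub_ne_zero.2 hts)))
  have hrem : Tendsto (fun δ => ∫ ξ, (R δ ξ : ℂ) * g ξ) (𝓝[>] 0) (𝓝 0) := by
    simpa using tendsto_integral_ofReal_mul_of_abs_le (f := 0) hg
      (Eventually.of_forall fun δ => (by fun_prop : Continuous (R δ)).aestronglyMeasurable)
      (Eventually.of_forall fun δ => ae_of_all _ (hR_le δ)) hR_lim
  simpa [hsplit] using (hmain.const_mul (m / 2 : ℂ)).add hrem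

theorem norm_rescaledCovariance_le_of_mem_uIoc (hg : Integrable g) (a δ : ℝ) {T t s : ℝ}
    (ht : t ∈ Ι 0 T) (hs : s ∈ Ι 0 T) :
    ‖rescaledCovariance g a δ t s‖ ≤ |T| * ∫ ξ, ‖g ξ‖ := by
  have hmin : min t s ∈ Ι 0 T := by rcases min_choice t s with h | h <;> rw [h] <;> assumption
  refine (norm_rescaledCovariance_le hg a δ t s).trans (mul_le_mul_of_nonneg_right ?_
    (integral_nonneg fun _ => norm_nonneg _))
  simpa using Set.abs_sub_left_of_mem_uIcc (Set.uIoc_subset_uIcc hmin)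

end RescaledCovariance

theorem variance_rescaled_fisher_information_vanishes_general (g : ℝ → ℂ) (hg : Integrable g)
    (a : ℝ) (ha : 0 < a) (T : ℝ) :
    Tendsto (fun δ : ℝ =>
        ∫ t in (0 : ℝ)..T, ∫ s in (0 : ℝ)..T,
          ‖∫ ξ : ℝ,
            (((∫ r in (0 : ℝ)..(min t s),
                Real.sin (δ⁻¹ * (t - r) * a * |ξ|) *
                  Real.sin (δ⁻¹ * (s - r) * a * |ξ|)) : ℝ) : ℂ) * g ξ‖ ^ 2)
      (nhdsWithin 0 (Set.Ioi 0)) (nhds 0) := by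
  simp only [← rescaledCovariance_eq]
  set Φ := rescaledCovariance g a
  set C := |T| * ∫ ξ, ‖g ξ‖
  have hcont (δ : ℝ) : Continuous fun p : ℝ × ℝ => ‖Φ δ p.1 p.2‖ ^ 2 :=
    (continuous_rescaledCovariance hg a δ).norm.pow 2
  have hbound (δ : ℝ) {t s : ℝ} (ht : t ∈ Ι 0 T) (hs : s ∈ Ι 0 T) : ‖Φ δ t s‖ ^ 2 ≤ C ^ 2 :=
    pow_le_pow_left₀ (norm_nonneg _) (norm_rescaledCovariance_le_of_mem_uIoc hg a δ ht hs) 2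
  have hinner (t : ℝ) (ht : t ∈ Ι 0 T) :
      Tendsto (fun δ => ∫ s in (0 : ℝ)..T, ‖Φ δ t s‖ ^ 2) (𝓝[>] 0) (𝓝 0) := by
    simpa using tendsto_integral_filter_of_norm_le_const (f := 0) (C := C ^ 2)
      (Eventually.of_forall fun δ =>
        ((hcont δ).comp (Continuous.prodMk_right t)).aestronglyMeasurable)
      (Eventually.of_forall fun δ s hs => by simpa using hbound δ ht hs)
      ((Measure.ae_ne volume t).mono fun s hs _ => by
        simpa using ((tendsto_rescaledCovariance_of_ne hg ha.ne' hs.symm).norm).pow 2)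
  simpa using tendsto_integral_filter_of_norm_le_const (f := 0) (C := C ^ 2 * |T|)
    (Eventually.of_forall fun δ =>
      (continuous_parametric_intervalIntegral_of_continuous' (hcont δ) 0 T).aestronglyMeasurable)
    (Eventually.of_forall fun δ t ht =>
      (intervalIntegral.norm_integral_le_of_norm_le_const fun s hs => by
        simpa using hbound δ ht hs).trans_eq (by rw [sub_zero]))
    (ae_of_all _ hinner)

/-- **Vanishing of the variance of the rescaled observed Fisher information (equation
(4.14), analytic form).** For integrable `g : ℝ → ℂ`, `a > 0`, `T > 0` and
`Φ_δ(t,s) = ∫_ℝ (∫₀^{min(t,s)} sin(δ⁻¹(t−r)a|ξ|) sin(δ⁻¹(s−r)a|ξ|) dr) g(ξ) dξ`,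
we have `∫₀ᵀ ∫₀ᵀ |Φ_δ(t,s)|² ds dt → 0` as `δ → 0⁺`. -/
theorem variance_rescaled_fisher_information_vanishes (g : ℝ → ℂ) (hg : Integrable g)
    (a : ℝ) (ha : 0 < a) (T : ℝ) (hT : 0 < T) :
    Tendsto (fun δ : ℝ =>
        ∫ t in (0 : ℝ)..T, ∫ s in (0 : ℝ)..T,
          ‖∫ ξ : ℝ,
            (((∫ r in (0 : ℝ)..(min t s),
                Real.sin (δ⁻¹ * (t - r) * a * |ξ|) *
                  Real.sin (δ⁻¹ * (s - r) * a * |ξ|)) : ℝ) : ℂ) * g ξ‖ ^ 2)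
      (nhdsWithin 0 (Set.Ioi 0)) (nhds 0) :=
  variance_rescaled_fisher_information_vanishes_general g hg a ha T
end
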